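/- arXiv:2009.02786 — 3 statements merged into one kernel-verified Lean document; each statement's English description precedes it below -/
import Mathlib

section
/- For all vectors x, y in R^d one has √2·‖x‖·‖y‖ ≤ ‖x⊙y‖_tr ≤ 2·‖x‖·‖y‖, where x⊙y = x yᵀ + y xᵀ. -/
open Matrix

/-- For all `x, y ∈ ℝ^d`: `√2 ‖x‖ ‖y‖ ≤ ‖x ⊙ y‖_tr ≤ 2 ‖x‖ ‖y‖`, where
`x ⊙ y = x yᵀ + y xᵀ` and `‖A‖_tr = √(tr (Aᵀ A))` is the Frobenius norm. -/
theorem frobenius_symm_tensor_bounds {d : ℕ} (x y : EuclideanSpace ℝ (Fin d)) :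
    Real.sqrt 2 * ‖x‖ * ‖y‖ ≤
      Real.sqrt (Matrix.trace ((vecMulVec x y + vecMulVec y x)ᵀ * (vecMulVec x y + vecMulVec y x)))
    ∧ Real.sqrt (Matrix.trace ((vecMulVec x y + vecMulVec y x)ᵀ * (vecMulVec x y + vecMulVec y x)))
        ≤ 2 * ‖x‖ * ‖y‖ := by
  have hT : Matrix.trace ((vecMulVec x y + vecMulVec y x)ᵀ * (vecMulVec x y + vecMulVec y x))
      = 2 * (∑ i, x i ^ 2) * (∑ i, y i ^ 2) + 2 * (∑ i, x i * y i) ^ 2 := by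
    simp only [Matrix.trace, Matrix.diag, Matrix.mul_apply, Matrix.transpose_apply,
      Matrix.add_apply, vecMulVec_apply]
    have inner : ∀ i, ∑ j, (x j * y i + y j * x i) * (x j * y i + y j * x i)
        = (∑ j, x j ^ 2) * y i ^ 2 + 2 * (∑ j, x j * y j) * (x i * y i)
          + (∑ j, y j ^ 2) * x i ^ 2 := by
      intro i
      rw [Finset.sum_congr rfl (fun j _ => by ring :
        ∀ j ∈ Finset.univ, (x j * y i + y j * x i) * (x j * y i + y j * x i)
          = x j ^ 2 * y i ^ 2 + 2 * ((x j * y j) * (x i * y i)) + y j ^ 2 * x i ^ 2)]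
      simp only [Finset.sum_add_distrib, ← Finset.sum_mul, ← Finset.mul_sum]
      ring
    simp_rw [inner]
    simp only [Finset.sum_add_distrib, ← Finset.mul_sum]
    ring
  set Sx := ∑ i, x i ^ 2 with hSx
  set Sy := ∑ i, y i ^ 2 with hSy
  set P := ∑ i, x i * y i with hP
  have hSx0 : 0 ≤ Sx := Finset.sum_nonneg fun i _ => sq_nonneg _
  have hSy0 : 0 ≤ Sy := Finset.sum_nonneg fun i _ => sq_nonneg _
  have hx : ‖x‖ = Real.sqrt Sx := by
    rw [EuclideanSpace.norm_eq]; simp [Real.norm_eq_abs, sq_abs, hSx]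
  have hy : ‖y‖ = Real.sqrt Sy := by
    rw [EuclideanSpace.norm_eq]; simp [Real.norm_eq_abs, sq_abs, hSy]
  have hCS : P ^ 2 ≤ Sx * Sy := by
    simpa [hP, hSx, hSy] using Finset.sum_mul_sq_le_sq_mul_sq Finset.univ x y
  constructor
  · have h1 : Real.sqrt 2 * ‖x‖ * ‖y‖ = Real.sqrt (2 * Sx * Sy) := by
      rw [hx, hy, ← Real.sqrt_mul (by norm_num : (0:ℝ) ≤ 2), ← Real.sqrt_mul (by positivity)]
    rw [h1, hT]
    exact Real.sqrt_le_sqrt (by nlinarith [sq_nonneg P])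
  · have h2 : 2 * ‖x‖ * ‖y‖ = Real.sqrt (4 * Sx * Sy) := by
      rw [hx, hy]
      rw [show (4:ℝ) * Sx * Sy = (2 * Real.sqrt Sx * Real.sqrt Sy) ^ 2 by
        rw [mul_pow, mul_pow, Real.sq_sqrt hSx0, Real.sq_sqrt hSy0]; ring]
      rw [Real.sqrt_sq (by positivity)]
    rw [h2, hT]
    exact Real.sqrt_le_sqrt (by nlinarith)
end

section
/- Fix β ∈ (0,2), r > 0 and ε > 0, and define δ(Δ) = (Δ·log(1/Δ))^{-1/β} and v(Δ) = Δ^{1/(2β)}·log(1/Δ). Then lim_{Δ → 0⁺} Δ·δ(Δ)²·r² · ∫_{v(Δ)}^{1} ( ∫_0^{ε/(δ(Δ)·ρ₂·r)} ρ₁^{1-β} dρ₁ ) ρ₂^{1-β} dρ₂ = r^β · ε^{2-β} / (2β(2-β)). -/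
open MeasureTheory Filter Real
open scoped Topology

/-- Fix `β ∈ (0,2)`, `r > 0`, `ε > 0`; let `δ(Δ) = (Δ log(1/Δ))^{-1/β}` and
`v(Δ) = Δ^{1/(2β)} log(1/Δ)`. Then
`Δ δ(Δ)² r² ∫_{v(Δ)}^1 (∫_0^{ε/(δ(Δ)ρ₂r)} ρ₁^{1-β} dρ₁) ρ₂^{1-β} dρ₂
  → r^β ε^{2-β} / (2β(2-β))` as `Δ → 0⁺`. -/
theorem small_jump_truncation_limit {β r ε : ℝ} (hβ₀ : 0 < β) (hβ₂ : β < 2)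
    (hr : 0 < r) (hε : 0 < ε) :
    Tendsto
      (fun Δ : ℝ =>
        Δ * ((Δ * Real.log (1 / Δ)) ^ (-1 / β)) ^ 2 * r ^ 2 *
          ∫ ρ₂ in Set.Ioc (Δ ^ (1 / (2 * β)) * Real.log (1 / Δ)) 1,
            (∫ ρ₁ in Set.Ioc (0:ℝ) (ε / ((Δ * Real.log (1 / Δ)) ^ (-1 / β) * ρ₂ * r)),
              ρ₁ ^ (1 - β)) * ρ₂ ^ (1 - β))
      (nhdsWithin 0 (Set.Ioi (0:ℝ)))
      (nhds (r ^ β * ε ^ (2 - β) / (2 * β * (2 - β)))) := by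
  have hβ : β ≠ 0 := ne_of_gt hβ₀
  have h2β : (2:ℝ) - β ≠ 0 := by linarith
  set c : ℝ := 1 / (2 * β) with hc
  set K : ℝ := r ^ β * ε ^ (2 - β) / (2 - β) with hK
  -- the function `v` tends to 0
  have hv_small : Tendsto (fun Δ : ℝ => Δ ^ c * Real.log (1 / Δ)) (𝓝[>] 0) (𝓝 0) := by
    have h := tendsto_log_mul_rpow_nhdsGT_zero (r := c) (by rw [hc]; positivity)
    have : Tendsto (fun x : ℝ => -(Real.log x * x ^ c)) (𝓝[>] 0) (𝓝 0) := by
      simpa using h.neg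
    refine this.congr fun x => ?_
    rw [one_div, Real.log_inv]; ring
  -- eventual equality with the simplified function
  have key : ∀ᶠ Δ in 𝓝[>] (0:ℝ),
      Δ * ((Δ * Real.log (1 / Δ)) ^ (-1 / β)) ^ 2 * r ^ 2 *
          (∫ ρ₂ in Set.Ioc (Δ ^ (1 / (2 * β)) * Real.log (1 / Δ)) 1,
            (∫ ρ₁ in Set.Ioc (0:ℝ) (ε / ((Δ * Real.log (1 / Δ)) ^ (-1 / β) * ρ₂ * r)),
              ρ₁ ^ (1 - β)) * ρ₂ ^ (1 - β))
        = K * (c - Real.log (Real.log (1 / Δ)) / Real.log (1 / Δ)) := by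
    have h1 : Set.Ioo (0:ℝ) 1 ∈ 𝓝[>] (0:ℝ) :=
      Ioo_mem_nhdsGT_of_mem ⟨le_refl 0, zero_lt_one⟩
    filter_upwards [h1, hv_small.eventually (eventually_lt_nhds zero_lt_one)]
      with Δ hΔm hv1
    obtain ⟨hΔ0, hΔ1⟩ := hΔm
    have hlog : 0 < Real.log (1 / Δ) := by
      rw [one_div, Real.log_inv]; linarith [Real.log_neg hΔ0 hΔ1]
    have hL : 0 < Δ * Real.log (1 / Δ) := mul_pos hΔ0 hlog
    set L : ℝ := Δ * Real.log (1 / Δ) with hLdef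
    set δ : ℝ := L ^ (-1 / β) with hδdef
    have hδ : 0 < δ := Real.rpow_pos_of_pos hL _
    have hv0 : 0 < Δ ^ c * Real.log (1 / Δ) :=
      mul_pos (Real.rpow_pos_of_pos hΔ0 _) hlog
    set v : ℝ := Δ ^ c * Real.log (1 / Δ) with hvdef
    -- inner integral
    have inner : ∀ a : ℝ, 0 < a →
        (∫ x in Set.Ioc (0:ℝ) a, x ^ (1 - β)) = a ^ (2 - β) / (2 - β) := by
      intro a ha
      rw [← intervalIntegral.integral_of_le ha.le,
        integral_rpow (Or.inl (by linarith : (-1:ℝ) < 1 - β))]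
      have h1 : (1:ℝ) - β + 1 = 2 - β := by ring
      rw [h1, Real.zero_rpow h2β, sub_zero]
    -- simplify the outer integrand
    have hcong : Set.EqOn
        (fun ρ₂ : ℝ => (∫ ρ₁ in Set.Ioc (0:ℝ) (ε / (δ * ρ₂ * r)), ρ₁ ^ (1 - β)) * ρ₂ ^ (1 - β))
        (fun ρ₂ : ℝ => (ε / (δ * r)) ^ (2 - β) / (2 - β) * ρ₂⁻¹)
        (Set.Ioc v 1) := by
      intro ρ₂ hρ
      have hρ0 : 0 < ρ₂ := lt_trans hv0 hρ.1
      simp only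
      rw [inner _ (div_pos hε (mul_pos (mul_pos hδ hρ0) hr))]
      have hfrac : ε / (δ * ρ₂ * r) = ε / (δ * r) * ρ₂⁻¹ := by
        rw [show δ * ρ₂ * r = δ * r * ρ₂ by ring, ← div_div, div_eq_mul_inv]
      rw [hfrac, Real.mul_rpow (div_nonneg hε.le (mul_pos hδ hr).le) (inv_nonneg.2 hρ0.le),
        Real.inv_rpow hρ0.le]
      have h2 : (ρ₂ ^ ((2:ℝ) - β))⁻¹ * ρ₂ ^ ((1:ℝ) - β) = ρ₂⁻¹ := by
        rw [← Real.rpow_neg hρ0.le, ← Real.rpow_add hρ0]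
        have : -((2:ℝ) - β) + (1 - β) = -1 := by ring
        rw [this, Real.rpow_neg_one]
      calc (ε / (δ * r)) ^ ((2:ℝ) - β) * (ρ₂ ^ ((2:ℝ) - β))⁻¹ / (2 - β) * ρ₂ ^ ((1:ℝ) - β)
          = (ε / (δ * r)) ^ ((2:ℝ) - β) / (2 - β) * ((ρ₂ ^ ((2:ℝ) - β))⁻¹ * ρ₂ ^ ((1:ℝ) - β)) := by
            ring
        _ = (ε / (δ * r)) ^ ((2:ℝ) - β) / (2 - β) * ρ₂⁻¹ := by rw [h2]
    rw [setIntegral_congr_fun measurableSet_Ioc hcong, integral_const_mul]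
    have hIv : (∫ ρ₂ in Set.Ioc v 1, ρ₂⁻¹) = Real.log (1 / v) := by
      rw [← intervalIntegral.integral_of_le hv1.le, integral_inv]
      rw [Set.uIcc_of_le hv1.le]
      rintro ⟨h0, -⟩; linarith
    rw [hIv]
    -- now the algebra
    have hA : (ε / (δ * r)) ^ ((2:ℝ) - β) = ε ^ ((2:ℝ) - β) / (δ ^ ((2:ℝ) - β) * r ^ ((2:ℝ) - β)) := by
      rw [Real.div_rpow hε.le (mul_pos hδ hr).le, Real.mul_rpow hδ.le hr.le]
    have hδ2 : δ ^ 2 = δ ^ ((2:ℝ)) := by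
      rw [show ((2:ℝ)) = ((2:ℕ):ℝ) by norm_num, Real.rpow_natCast]
    have hr2 : r ^ 2 = r ^ ((2:ℝ)) := by
      rw [show ((2:ℝ)) = ((2:ℕ):ℝ) by norm_num, Real.rpow_natCast]
    have e1 : δ ^ ((2:ℝ)) = δ ^ β * δ ^ ((2:ℝ) - β) := by
      rw [← Real.rpow_add hδ]; congr 1; ring
    have e2 : r ^ ((2:ℝ)) = r ^ β * r ^ ((2:ℝ) - β) := by
      rw [← Real.rpow_add hr]; congr 1; ring
    have hδβL : δ ^ β = L⁻¹ := by
      rw [hδdef, ← Real.rpow_mul hL.le, show -1 / β * β = -1 by field_simp,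
        Real.rpow_neg_one]
    have hlogv : Real.log (1 / v) = c * Real.log (1 / Δ) - Real.log (Real.log (1 / Δ)) := by
      rw [one_div, Real.log_inv, hvdef,
        Real.log_mul (Real.rpow_pos_of_pos hΔ0 c).ne' (ne_of_gt hlog),
        Real.log_rpow hΔ0,
        show Real.log Δ = -Real.log (1 / Δ) by rw [one_div, Real.log_inv, neg_neg]]
      ring
    rw [hlogv, hA]
    have hne : δ ^ ((2:ℝ) - β) ≠ 0 := (Real.rpow_pos_of_pos hδ _).ne'
    have hne2 : r ^ ((2:ℝ) - β) ≠ 0 := (Real.rpow_pos_of_pos hr _).ne'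
    have key2 : Δ * δ ^ 2 * r ^ 2 * (ε ^ ((2:ℝ) - β) / (δ ^ ((2:ℝ) - β) * r ^ ((2:ℝ) - β)))
        = r ^ β * ε ^ ((2:ℝ) - β) / Real.log (1 / Δ) := by
      rw [hδ2, hr2, e1, e2, hδβL, hLdef]
      field_simp
    calc Δ * δ ^ 2 * r ^ 2 *
          (ε ^ ((2:ℝ) - β) / (δ ^ ((2:ℝ) - β) * r ^ ((2:ℝ) - β)) / (2 - β) *
            (c * Real.log (1 / Δ) - Real.log (Real.log (1 / Δ))))
        = Δ * δ ^ 2 * r ^ 2 * (ε ^ ((2:ℝ) - β) / (δ ^ ((2:ℝ) - β) * r ^ ((2:ℝ) - β))) *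
            ((c * Real.log (1 / Δ) - Real.log (Real.log (1 / Δ))) / (2 - β)) := by ring
      _ = r ^ β * ε ^ ((2:ℝ) - β) / Real.log (1 / Δ) *
            ((c * Real.log (1 / Δ) - Real.log (Real.log (1 / Δ))) / (2 - β)) := by rw [key2]
      _ = K * (c - Real.log (Real.log (1 / Δ)) / Real.log (1 / Δ)) := by
            rw [hK, show c - Real.log (Real.log (1 / Δ)) / Real.log (1 / Δ)
                = (c * Real.log (1 / Δ) - Real.log (Real.log (1 / Δ))) / Real.log (1 / Δ) by
              field_simp]
            ring
  -- the limit of the simplified function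
  have hlog_top : Tendsto (fun Δ : ℝ => Real.log (1 / Δ)) (𝓝[>] (0:ℝ)) atTop := by
    have h1 : Tendsto (fun Δ : ℝ => (1:ℝ) / Δ) (𝓝[>] (0:ℝ)) atTop := by
      simpa [one_div] using tendsto_inv_nhdsGT_zero (𝕜 := ℝ)
    exact Real.tendsto_log_atTop.comp h1
  have hratio : Tendsto (fun Δ : ℝ => Real.log (Real.log (1 / Δ)) / Real.log (1 / Δ))
      (𝓝[>] (0:ℝ)) (𝓝 0) := by
    have h2 : Tendsto (fun x : ℝ => Real.log x / x) atTop (𝓝 0) := by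
      simpa using Real.isLittleO_log_id_atTop.tendsto_div_nhds_zero
    exact h2.comp hlog_top
  have hfinal : Tendsto (fun Δ : ℝ => K * (c - Real.log (Real.log (1 / Δ)) / Real.log (1 / Δ)))
      (𝓝[>] (0:ℝ)) (𝓝 (r ^ β * ε ^ (2 - β) / (2 * β * (2 - β)))) := by
    have h3 : Tendsto (fun Δ : ℝ => K * (c - Real.log (Real.log (1 / Δ)) / Real.log (1 / Δ)))
        (𝓝[>] (0:ℝ)) (𝓝 (K * (c - 0))) :=
      (tendsto_const_nhds.sub hratio).const_mul K
    convert h3 using 2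
    rw [sub_zero, hK, hc]
    field_simp
  exact Tendsto.congr' (by filter_upwards [key] with Δ h using h.symm) hfinal
end

section
/- Fix β ∈ (0,1] and w ∈ (0,1), set δ(Δ) = (Δ·log(1/Δ))^{-1/β} and v(Δ) = 1/δ(Δ) = (Δ·log(1/Δ))^{1/β}. Then lim_{Δ → 0⁺} Δ · ∫_{v(Δ)}^{1} ∫_{v(Δ)}^{1} (ρ₁ρ₂)^{-1-β} · 1_{{δ(Δ)·ρ₁·ρ₂ > w}} dρ₁ dρ₂ = 1/(β²·w^β). -/
open MeasureTheory Filter Real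

/-! The double integral has a closed form. For fixed `ρ₂` the inner integral runs over
`ρ₁ > max v (w v / ρ₂)`, and the indicator constraint is the active one exactly when `ρ₂ ≤ w`;
splitting the outer integral at `w` gives
`β² ∫∫ = (w v)^{-β} (β log (w / v) + 1) - 2 v^{-β} + 1`.
With `L = log (1/Δ)` one has `v^{-β} = (Δ L)⁻¹` and `β log (1/v) = L - log L`, so after
multiplying by `Δ` only the term `w^{-β} (L - log L) / L → w^{-β}` survives. -/

lemma integral_rpow_neg_one_sub {β a b : ℝ} (hβ : β ≠ 0) (ha : 0 < a) (hb : 0 < b) :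
    ∫ ρ in a..b, ρ ^ (-1 - β) = (a ^ (-β) - b ^ (-β)) / β := by
  rw [integral_rpow (Or.inr ⟨by contrapose! hβ; linarith, Set.notMem_uIcc_of_lt ha hb⟩),
    show -1 - β + 1 = -β by ring]
  field_simp
  ring

lemma lt_inv_mul_mul_iff {v w a b : ℝ} (hv : 0 < v) : w < v⁻¹ * a * b ↔ w * v < a * b := by
  rw [mul_assoc, ← div_eq_inv_mul, lt_div_iff₀ hv]

lemma integral_Ioc_ite_lt_mul_rpow {β v c ρ₂ : ℝ} (hβ : β ≠ 0) (hv : 0 < v) (hv1 : v ≤ 1)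
    (hc : c ≤ ρ₂) (hc0 : 0 < c) :
    ∫ ρ₁ in Set.Ioc v 1, (if c < ρ₁ * ρ₂ then (ρ₁ * ρ₂) ^ (-1 - β) else 0)
      = ρ₂ ^ (-1 - β) * ((max v (c / ρ₂)) ^ (-β) - 1) / β := by
  have hρ₂ : 0 < ρ₂ := hc0.trans_le hc
  have hpt : ∀ ρ₁, (if c < ρ₁ * ρ₂ then (ρ₁ * ρ₂) ^ (-1 - β) else 0)
      = ρ₂ ^ (-1 - β) * (Set.Ioi (c / ρ₂)).indicator (fun ρ => ρ ^ (-1 - β)) ρ₁ := by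
    intro ρ₁
    by_cases h : c / ρ₂ < ρ₁
    · have h' : c < ρ₁ * ρ₂ := (div_lt_iff₀ hρ₂).1 h
      rw [if_pos h', Set.indicator_of_mem (Set.mem_Ioi.2 h),
        mul_rpow ((div_pos hc0 hρ₂).trans h).le hρ₂.le, mul_comm]
    · have h' : ¬ c < ρ₁ * ρ₂ := fun h' => h ((div_lt_iff₀ hρ₂).2 h')
      rw [if_neg h', Set.indicator_of_notMem (mt Set.mem_Ioi.1 h), mul_zero]
  simp_rw [hpt]
  rw [integral_const_mul, integral_indicator measurableSet_Ioi,
    Measure.restrict_restrict measurableSet_Ioi, Set.inter_comm, Set.Ioc_inter_Ioi,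
    ← intervalIntegral.integral_of_le (sup_le hv1 ((div_le_one hρ₂).2 hc)),
    integral_rpow_neg_one_sub hβ (lt_sup_of_lt_left hv) one_pos,
    one_rpow, mul_div_assoc]

lemma intervalIntegrable_rpow_mul_max_rpow {β v c : ℝ} (hv : 0 < v) (hv1 : v ≤ 1) :
    IntervalIntegrable (fun ρ : ℝ => ρ ^ (-1 - β) * ((max v (c / ρ)) ^ (-β) - 1) / β)
      volume v 1 := by
  refine ContinuousOn.intervalIntegrable fun x hx => ?_
  rw [Set.uIcc_of_le hv1] at hx
  have hx0 : x ≠ 0 := (hv.trans_le hx.1).ne'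
  have hm : max v (c / x) ≠ 0 := (lt_sup_of_lt_left hv).ne'
  exact (((continuousAt_id.rpow_const (Or.inl hx0)).mul
    (((continuousAt_const.max (continuousAt_const.div continuousAt_id hx0)).rpow_const
      (Or.inl hm)).sub continuousAt_const)).div_const β).continuousWithinAt

lemma rpow_mul_max_rpow_of_le {β v w ρ : ℝ} (hv : 0 < v) (hρ : 0 < ρ) (hρw : ρ ≤ w) :
    ρ ^ (-1 - β) * ((max v (w * v / ρ)) ^ (-β) - 1) / β
      = ((w * v) ^ (-β) * ρ⁻¹ - ρ ^ (-1 - β)) / β := by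
  have hmax : max v (w * v / ρ) = w * v / ρ :=
    max_eq_right ((le_div_iff₀ hρ).2 (by nlinarith))
  have hcancel : ρ ^ (-1 - β) / ρ ^ (-β) = ρ⁻¹ := by
    rw [← rpow_sub hρ, show -1 - β - -β = -1 by ring, rpow_neg_one]
  rw [hmax, div_rpow (mul_pos (hρ.trans_le hρw) hv).le hρ.le, ← hcancel]
  ring

lemma rpow_mul_max_rpow_of_ge {β v w ρ : ℝ} (hv : 0 ≤ v) (hρ : 0 < ρ) (hwρ : w ≤ ρ) :
    ρ ^ (-1 - β) * ((max v (w * v / ρ)) ^ (-β) - 1) / β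
      = (v ^ (-β) - 1) / β * ρ ^ (-1 - β) := by
  rw [max_eq_left ((div_le_iff₀ hρ).2 (by nlinarith))]
  ring

lemma integral_rpow_mul_max_rpow {β v w : ℝ} (hβ : β ≠ 0) (hv : 0 < v) (hvw : v ≤ w)
    (hw : w ≤ 1) :
    β ^ 2 * ∫ ρ in v..1, ρ ^ (-1 - β) * ((max v (w * v / ρ)) ^ (-β) - 1) / β
      = w ^ (-β) * v ^ (-β) * (β * (log w - log v) + 1) - 2 * v ^ (-β) + 1 := by
  have hw0 : 0 < w := hv.trans_le hvw
  have hint := intervalIntegrable_rpow_mul_max_rpow (β := β) (c := w * v) hv (hvw.trans hw)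
  have hv0w : (0 : ℝ) ∉ Set.uIcc v w := Set.notMem_uIcc_of_lt hv hw0
  rw [← intervalIntegral.integral_add_adjacent_intervals
      (hint.mono_set (Set.uIcc_subset_uIcc_left (Set.mem_uIcc_of_le hvw hw)))
      (hint.mono_set (Set.uIcc_subset_uIcc_right (Set.mem_uIcc_of_le hvw hw))),
    intervalIntegral.integral_congr fun ρ hρ =>
      rpow_mul_max_rpow_of_le hv (hv.trans_le (Set.uIcc_of_le hvw ▸ hρ).1)
        (Set.uIcc_of_le hvw ▸ hρ).2,
    intervalIntegral.integral_congr fun ρ hρ =>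
      rpow_mul_max_rpow_of_ge hv.le (hw0.trans_le (Set.uIcc_of_le hw ▸ hρ).1)
        (Set.uIcc_of_le hw ▸ hρ).1,
    intervalIntegral.integral_div, intervalIntegral.integral_sub
      ((intervalIntegrable_inv_iff.2 (Or.inr hv0w)).const_mul _)
      (intervalIntegral.intervalIntegrable_rpow (Or.inr hv0w)),
    intervalIntegral.integral_const_mul, intervalIntegral.integral_const_mul,
    integral_inv_of_pos hv hw0, integral_rpow_neg_one_sub hβ hv hw0,
    integral_rpow_neg_one_sub hβ hw0 one_pos, log_div hw0.ne' hv.ne', one_rpow,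
    mul_rpow hw0.le hv.le]
  field_simp
  ring

lemma sq_mul_integral_big_jumps {β v w : ℝ} (hβ : β ≠ 0) (hv : 0 < v) (hvw : v ≤ w)
    (hw : w ≤ 1) :
    β ^ 2 * ∫ ρ₂ in Set.Ioc v 1, ∫ ρ₁ in Set.Ioc v 1,
        (if w < v⁻¹ * ρ₁ * ρ₂ then (ρ₁ * ρ₂) ^ (-1 - β) else 0)
      = w ^ (-β) * v ^ (-β) * (β * (log w - log v) + 1) - 2 * v ^ (-β) + 1 := by
  have hwv : 0 < w * v := mul_pos (hv.trans_le hvw) hv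
  simp_rw [lt_inv_mul_mul_iff hv]
  rw [setIntegral_congr_fun measurableSet_Ioc fun ρ₂ hρ₂ =>
      integral_Ioc_ite_lt_mul_rpow hβ hv (hvw.trans hw)
        ((mul_le_of_le_one_left hv.le hw).trans hρ₂.1.le) hwv,
    ← intervalIntegral.integral_of_le (hvw.trans hw), integral_rpow_mul_max_rpow hβ hv hvw hw]

lemma tendsto_log_one_div_nhdsGT_zero :
    Tendsto (fun Δ : ℝ => log (1 / Δ)) (nhdsWithin 0 (Set.Ioi 0)) atTop := by
  refine (tendsto_neg_atBot_atTop.comp tendsto_log_nhdsGT_zero).congr fun Δ => ?_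
  simp [log_inv]

lemma tendsto_mul_log_one_div_nhdsGT_zero :
    Tendsto (fun Δ : ℝ => Δ * log (1 / Δ)) (nhdsWithin 0 (Set.Ioi 0)) (nhds 0) := by
  have h := (continuous_negMulLog.tendsto 0).mono_left (nhdsWithin_le_nhds (s := Set.Ioi 0))
  rw [negMulLog_zero] at h
  refine h.congr fun Δ => ?_
  simp [negMulLog, log_inv]

lemma tendsto_one_add_inv_mul_sub_log_div_self (a : ℝ) :
    Tendsto (fun L : ℝ => 1 + L⁻¹ * a - log L / L) atTop (nhds 1) := by
  have h := ((tendsto_const_nhds (x := (1 : ℝ))).add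
    (tendsto_inv_atTop_zero.mul_const a)).sub isLittleO_log_id_atTop.tendsto_div_nhds_zero
  simpa using h

lemma mul_integral_big_jumps_eq {β w Δ : ℝ} (hβ : 0 < β) (hw : w ≤ 1) (hΔ : Δ ∈ Set.Ioo 0 1)
    (hvw : (Δ * log (1 / Δ)) ^ (1 / β) ≤ w) :
    Δ * ∫ ρ₂ in Set.Ioc ((Δ * log (1 / Δ)) ^ (1 / β)) 1,
          ∫ ρ₁ in Set.Ioc ((Δ * log (1 / Δ)) ^ (1 / β)) 1,
            (if w < (Δ * log (1 / Δ)) ^ (-1 / β) * ρ₁ * ρ₂ then (ρ₁ * ρ₂) ^ (-1 - β) else 0)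
      = (w ^ (-β) * (1 + (log (1 / Δ))⁻¹ * (β * log w + 1) - log (log (1 / Δ)) / log (1 / Δ))
          - 2 * (log (1 / Δ))⁻¹ + Δ) / β ^ 2 := by
  obtain ⟨hΔ0, hΔ1⟩ := hΔ
  set L := log (1 / Δ) with hL
  have hlogΔ : log Δ = -L := by rw [hL, one_div, log_inv, neg_neg]
  have hL0 : 0 < L := by rw [hL, one_div, log_inv]; linarith [log_neg hΔ0 hΔ1]
  have ht : 0 < Δ * L := mul_pos hΔ0 hL0
  set v := (Δ * L) ^ (1 / β) with hv
  have hv0 : 0 < v := rpow_pos_of_pos ht _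
  have hδ : (Δ * L) ^ (-1 / β) = v⁻¹ := by rw [neg_div, rpow_neg ht.le]
  have hvβ : v ^ (-β) = (Δ * L)⁻¹ := by
    rw [hv, ← rpow_mul ht.le, show 1 / β * -β = -1 by field_simp, rpow_neg_one]
  have hlogv : log v = (log Δ + log L) / β := by
    rw [hv, log_rpow ht, log_mul hΔ0.ne' hL0.ne']; ring
  have hJ := sq_mul_integral_big_jumps hβ.ne' hv0 hvw hw
  rw [hδ, eq_div_iff (by positivity), mul_right_comm, mul_assoc, hJ, hvβ, hlogv, hlogΔ]
  field_simp
  ring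

theorem big_jump_levy_measure_limit_general {β w : ℝ} (hβ₀ : 0 < β)
    (hw₀ : 0 < w) (hw₁ : w < 1) :
    Tendsto
      (fun Δ : ℝ =>
        Δ * ∫ ρ₂ in Set.Ioc ((Δ * Real.log (1 / Δ)) ^ (1 / β)) 1,
              ∫ ρ₁ in Set.Ioc ((Δ * Real.log (1 / Δ)) ^ (1 / β)) 1,
                if w < (Δ * Real.log (1 / Δ)) ^ (-1 / β) * ρ₁ * ρ₂ then
                  (ρ₁ * ρ₂) ^ (-1 - β) else 0)
      (nhdsWithin 0 (Set.Ioi (0:ℝ)))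
      (nhds (1 / (β ^ 2 * w ^ β))) := by
  have hΔ : Tendsto (fun Δ : ℝ => Δ) (nhdsWithin 0 (Set.Ioi 0)) (nhds 0) :=
    tendsto_nhdsWithin_of_tendsto_nhds tendsto_id
  have hL := tendsto_log_one_div_nhdsGT_zero
  have hv : Tendsto (fun Δ : ℝ => (Δ * log (1 / Δ)) ^ (1 / β))
      (nhdsWithin 0 (Set.Ioi 0)) (nhds 0) := by
    simpa only [zero_rpow (one_div_pos.2 hβ₀).ne'] using
      tendsto_mul_log_one_div_nhdsGT_zero.rpow_const (Or.inr (one_div_pos.2 hβ₀).le)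
  have hlim := ((((tendsto_one_add_inv_mul_sub_log_div_self (β * log w + 1)).comp hL).const_mul
    (w ^ (-β))).sub ((tendsto_inv_atTop_zero.comp hL).const_mul 2)).add hΔ |>.div_const (β ^ 2)
  rw [show (w ^ (-β) * 1 - 2 * 0 + 0) / β ^ 2 = 1 / (β ^ 2 * w ^ β) by
    rw [mul_one, mul_zero, sub_zero, add_zero, rpow_neg hw₀.le]; field_simp] at hlim
  refine hlim.congr' ?_
  filter_upwards [Ioo_mem_nhdsGT one_pos, hv.eventually (ge_mem_nhds hw₀)] with Δ hΔ hvw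
  exact (mul_integral_big_jumps_eq hβ₀ hw₁.le hΔ hvw).symm

/-- Fix `β ∈ (0,1]` and `w ∈ (0,1)`; let `δ(Δ) = (Δ log(1/Δ))^{-1/β}` and
`v(Δ) = (Δ log(1/Δ))^{1/β}`. Then
`Δ ∫_{v(Δ)}^1 ∫_{v(Δ)}^1 (ρ₁ρ₂)^{-1-β} 1_{δ(Δ)ρ₁ρ₂ > w} dρ₁ dρ₂ → 1/(β² w^β)`
as `Δ → 0⁺`. -/
theorem big_jump_levy_measure_limit {β w : ℝ} (hβ₀ : 0 < β) (hβ₁ : β ≤ 1)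
    (hw₀ : 0 < w) (hw₁ : w < 1) :
    Tendsto
      (fun Δ : ℝ =>
        Δ * ∫ ρ₂ in Set.Ioc ((Δ * Real.log (1 / Δ)) ^ (1 / β)) 1,
              ∫ ρ₁ in Set.Ioc ((Δ * Real.log (1 / Δ)) ^ (1 / β)) 1,
                if w < (Δ * Real.log (1 / Δ)) ^ (-1 / β) * ρ₁ * ρ₂ then
                  (ρ₁ * ρ₂) ^ (-1 - β) else 0)
      (nhdsWithin 0 (Set.Ioi (0:ℝ)))
      (nhds (1 / (β ^ 2 * w ^ β))) :=
  big_jump_levy_measure_limit_general hβ₀ hw₀ hw₁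
end
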